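/- arXiv:2305.07160 — 5 statements merged into one kernel-verified Lean document; each statement's English description precedes it below -/
import Mathlib

section
/- Define D_I : SU₂ → [0,1] by D_I(B) = (1/π)·arccos(tr(B)/2), where tr(B) is real for B ∈ SU₂. Then for every X ∈ 𝔰𝔲₂, D_I(−exp(2πX)) equals the distance from ‖X‖ to the set of odd integers. -/
/-!
By Cayley–Hamilton a traceless skew-Hermitian `X ∈ 𝔰𝔲₂` satisfies `X² = -(‖X‖/2)²`, so for
`X ≠ 0` the matrix `J = X / (‖X‖/2)` is a square root of `-1` and
`exp(2πX) = cos(π‖X‖) + sin(π‖X‖) J` has trace `2 cos(π‖X‖)`. If `m` is the odd integer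
nearest to `‖X‖`, then `-cos(π‖X‖) = cos(π(‖X‖ - m))` with `|‖X‖ - m| ≤ 1`, so
`D_I(-exp(2πX)) = |‖X‖ - m|`.
-/

open Matrix

/-- The Killing norm `‖X‖ = √(−2 tr(X²))` on `𝔰𝔲₂`. -/
noncomputable def su2Norm (X : Matrix (Fin 2) (Fin 2) ℂ) : ℝ :=
  Real.sqrt (((-2 : ℂ) * (X * X).trace).re)

theorem NormedSpace.exp_smul_eq_cos_add_sin {A : Type*} [NormedRing A] [NormedAlgebra ℝ A]
    {J : A} (hJ : J * J = -1) (θ : ℝ) :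
    NormedSpace.exp (θ • J) = Real.cos θ • 1 + Real.sin θ • J := by
  let φ : ℂ →ₐ[ℝ] A := Complex.liftAux J hJ
  have hφ : Continuous φ := φ.toLinearMap.continuous_of_finiteDimensional
  have hθJ : θ • J = φ (θ * Complex.I) := by simp [φ, Complex.liftAux_apply]
  rw [hθJ, ← NormedSpace.map_exp_of_mem_ball (𝕂 := ℝ) φ hφ _
    (by simp [NormedSpace.expSeries_radius_eq_top]), ← Complex.exp_eq_exp_ℂ, Complex.exp_mul_I]
  simp [φ, Complex.liftAux_apply, Algebra.algebraMap_eq_smul_one, Complex.cos_ofReal_re,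
    Complex.sin_ofReal_re]

namespace Matrix

theorem mul_self_eq_neg_det_smul_one_of_trace_eq_zero {R : Type*} [CommRing R]
    {X : Matrix (Fin 2) (Fin 2) R} (h : X.trace = 0) : X * X = -X.det • 1 := by
  rw [trace_fin_two] at h
  ext i j
  fin_cases i <;> fin_cases j <;>
    simp only [Fin.zero_eta, Fin.mk_one, Fin.isValue, mul_apply, Fin.sum_univ_two, det_fin_two,
      smul_apply, one_apply_eq, one_apply_ne, ne_eq, zero_ne_one, one_ne_zero, not_false_eq_true,
      smul_eq_mul, mul_one, mul_zero]
  · linear_combination X 0 0 * h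
  · linear_combination X 0 1 * h
  · linear_combination X 1 0 * h
  · linear_combination X 1 1 * h

theorem trace_exp_smul_of_mul_self_eq_neg_sq {n : Type*} [Fintype n] [DecidableEq n]
    {X : Matrix n n ℂ} (htr : X.trace = 0) {s : ℝ} (hs : s ≠ 0) (hX : X * X = -(s ^ 2) • 1)
    (t : ℝ) : (NormedSpace.exp (t • X)).trace = Fintype.card n * Real.cos (t * s) := by
  have hJ : (s⁻¹ • X) * (s⁻¹ • X) = -1 := by
    rw [smul_mul_smul, hX, smul_smul]
    field_simp
    simp
  have hexp : NormedSpace.exp ((t * s) • (s⁻¹ • X))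
      = Real.cos (t * s) • 1 + Real.sin (t * s) • (s⁻¹ • X) := by
    -- `exp` depends only on the topology, so any compatible algebra norm may be chosen.
    let _ : NormedRing (Matrix n n ℂ) := Matrix.linftyOpNormedRing
    let _ : NormedAlgebra ℝ (Matrix n n ℂ) := Matrix.linftyOpNormedAlgebra
    exact NormedSpace.exp_smul_eq_cos_add_sin hJ (t * s)
  rw [show t • X = (t * s) • (s⁻¹ • X) by rw [smul_smul, mul_assoc, mul_inv_cancel₀ hs, mul_one],
    hexp, trace_add, trace_smul, trace_smul, trace_smul, htr, trace_one]
  simp [mul_comm]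

theorem det_eq_norm_sq_add_norm_sq_of_conjTranspose_eq_neg {X : Matrix (Fin 2) (Fin 2) ℂ}
    (htr : X.trace = 0) (hsk : Xᴴ = -X) : X.det = ((‖X 0 0‖ ^ 2 + ‖X 1 0‖ ^ 2 : ℝ) : ℂ) := by
  have h : Xᴴ * X = X.det • 1 := by
    rw [hsk, neg_mul, mul_self_eq_neg_det_smul_one_of_trace_eq_zero htr, neg_smul, neg_neg]
  have h00 := congrFun₂ h 0 0
  simp only [mul_apply, conjTranspose_apply, RCLike.star_def, Complex.conj_mul', Fin.sum_univ_two,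
    smul_apply, one_apply_eq, smul_eq_mul, mul_one] at h00
  exact_mod_cast h00.symm

end Matrix

theorem mul_self_eq_neg_su2Norm_div_two_sq_smul {X : Matrix (Fin 2) (Fin 2) ℂ}
    (htr : X.trace = 0) (hsk : Xᴴ = -X) :
    X * X = -((su2Norm X / 2) ^ 2) • (1 : Matrix (Fin 2) (Fin 2) ℂ) := by
  set r : ℝ := ‖X 0 0‖ ^ 2 + ‖X 1 0‖ ^ 2
  have hr : 0 ≤ r := by positivity
  have hX : X * X = -r • (1 : Matrix (Fin 2) (Fin 2) ℂ) := by
    rw [mul_self_eq_neg_det_smul_one_of_trace_eq_zero htr,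
      det_eq_norm_sq_add_norm_sq_of_conjTranspose_eq_neg htr hsk, ← Complex.ofReal_neg,
      Complex.coe_smul]
  have hnorm : su2Norm X = 2 * Real.sqrt r := by
    have hkilling : ((-2 : ℂ) * (X * X).trace).re = 2 ^ 2 * r := by
      rw [hX, trace_smul, trace_one, Fintype.card_fin]
      simp only [Nat.cast_ofNat, neg_smul, Complex.real_smul, Complex.neg_re, Complex.mul_re,
        Complex.re_ofNat, Complex.im_ofNat, Complex.ofReal_re, Complex.ofReal_im, Complex.neg_im,
        Complex.mul_im]
      ring
    rw [su2Norm, hkilling, Real.sqrt_mul (by positivity), Real.sqrt_sq zero_le_two]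
  rw [hX, hnorm, mul_div_cancel_left₀ _ two_ne_zero, Real.sq_sqrt hr]

open scoped ComplexOrder in
theorem trace_exp_two_pi_smul_su2 {X : Matrix (Fin 2) (Fin 2) ℂ} (htr : X.trace = 0)
    (hsk : Xᴴ = -X) :
    (NormedSpace.exp ((2 * Real.pi : ℝ) • X)).trace
      = ((2 * Real.cos (Real.pi * su2Norm X) : ℝ) : ℂ) := by
  have hX := mul_self_eq_neg_su2Norm_div_two_sq_smul htr hsk
  by_cases hs : su2Norm X / 2 = 0
  · have hX0 : X = 0 := by
      rw [← conjTranspose_mul_self_eq_zero, hsk, neg_mul, hX, hs]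
      simp
    rw [show su2Norm X = 0 by linarith, hX0]
    simp
  · rw [trace_exp_smul_of_mul_self_eq_neg_sq htr hs hX,
      show 2 * Real.pi * (su2Norm X / 2) = Real.pi * su2Norm X by ring, Fintype.card_fin]
    push_cast
    rfl

noncomputable def nearestOdd (r : ℝ) : ℤ := 2 * round ((r - 1) / 2) + 1

theorem odd_nearestOdd (r : ℝ) : Odd (nearestOdd r) := ⟨_, rfl⟩

theorem abs_sub_two_mul_add_one (r : ℝ) (k : ℤ) :
    |r - (2 * k + 1 : ℤ)| = 2 * |(r - 1) / 2 - k| := by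
  rw [show r - (2 * k + 1 : ℤ) = 2 * ((r - 1) / 2 - k) by push_cast; ring, abs_mul, abs_two]

theorem abs_sub_nearestOdd_le_one (r : ℝ) : |r - nearestOdd r| ≤ 1 := by
  rw [nearestOdd, abs_sub_two_mul_add_one]
  linarith [abs_sub_round ((r - 1) / 2)]

theorem abs_sub_nearestOdd_le (r : ℝ) {m : ℤ} (hm : Odd m) : |r - nearestOdd r| ≤ |r - m| := by
  obtain ⟨k, rfl⟩ := hm
  rw [nearestOdd, abs_sub_two_mul_add_one, abs_sub_two_mul_add_one]
  linarith [round_le ((r - 1) / 2) k]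

theorem sInf_abs_sub_odd (r : ℝ) :
    sInf {d : ℝ | ∃ m : ℤ, Odd m ∧ d = |r - m|} = |r - nearestOdd r| :=
  IsLeast.csInf_eq ⟨⟨_, odd_nearestOdd r, rfl⟩,
    by rintro _ ⟨m, hm, rfl⟩; exact abs_sub_nearestOdd_le r hm⟩

theorem arccos_neg_cos_pi_mul (r : ℝ) :
    Real.arccos (-Real.cos (Real.pi * r)) = Real.pi * |r - nearestOdd r| := by
  have hcos : -Real.cos (Real.pi * r) = Real.cos (Real.pi * |r - nearestOdd r|) := by
    obtain ⟨k, hk⟩ := odd_nearestOdd r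
    rw [← abs_of_pos Real.pi_pos, ← abs_mul, Real.cos_abs, abs_of_pos Real.pi_pos, hk]
    push_cast
    rw [show Real.pi * (r - (2 * k + 1)) = (Real.pi * r - Real.pi) - k * (2 * Real.pi) by ring,
      Real.cos_sub_int_mul_two_pi, Real.cos_sub_pi]
  rw [hcos, Real.arccos_cos (by positivity)]
  nlinarith [abs_sub_nearestOdd_le_one r, Real.pi_pos]

/-- With `D_I(B) = (1/π)·arccos(tr(B)/2)`, for every `X ∈ 𝔰𝔲₂` the quantity
`D_I(−exp(2πX))` equals the distance from `‖X‖` to the set of odd integers. -/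
theorem D_I_e_eq_dist_odd (X : Matrix (Fin 2) (Fin 2) ℂ)
    (hXtr : X.trace = 0) (hXsk : Xᴴ = -X) :
    (1 / Real.pi) *
        Real.arccos ((-NormedSpace.exp ((2 * Real.pi : ℝ) • X)).trace.re / 2)
      = sInf {d : ℝ | ∃ m : ℤ, Odd m ∧ d = |su2Norm X - (m : ℝ)|} := by
  have htrace : (-NormedSpace.exp ((2 * Real.pi : ℝ) • X)).trace.re / 2
      = -Real.cos (Real.pi * su2Norm X) := by
    rw [trace_neg, trace_exp_two_pi_smul_su2 hXtr hXsk, Complex.neg_re, Complex.ofReal_re]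
    ring
  rw [htrace, arccos_neg_cos_pi_mul, sInf_abs_sub_odd, one_div,
    inv_mul_cancel_left₀ Real.pi_ne_zero]
end

section
/- The commutator map c : SU₂ × SU₂ → SU₂ defined by c(M,N) = M N M⁻¹ N⁻¹ is surjective. -/
/-!
Conjugating by an `SU₂` matrix whose first column is a unit eigenvector of `C` makes `C` upper
triangular, hence diagonal, `diag(w, w̄)` with `|w| = 1`. Writing `w = z²` with `|z| = 1`, the
matrix `B = diag(z, z̄)` satisfies `⁅B, B₀⁆ = B²` for the quarter turn `B₀`. Since conjugation
maps commutators to commutators, every element of `SU₂` is a commutator.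
-/

open Matrix
open scoped commutatorElement

namespace Matrix

theorem star_fin_two_of {α : Type*} [Star α] (a b c d : α) :
    star !![a, b; c, d] = !![star a, star c; star b, star d] := by
  ext i j; fin_cases i <;> fin_cases j <;> rfl

section specialUnitaryGroup

variable {n : Type*} [DecidableEq n] [Fintype n] {α : Type*} [CommRing α] [StarRing α]

theorem mem_specialUnitaryGroup_iff_star_eq_adjugate {A : Matrix n n α} :
    A ∈ specialUnitaryGroup n α ↔ star A = A.adjugate ∧ A.det = 1 := by
  rw [mem_specialUnitaryGroup_iff, mem_unitaryGroup_iff']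
  constructor
  · rintro ⟨hA, hdet⟩
    refine ⟨?_, hdet⟩
    calc star A = star A * (A * A.adjugate) := by rw [mul_adjugate, hdet, one_smul, mul_one]
      _ = A.adjugate := by rw [← mul_assoc, hA, one_mul]
  · rintro ⟨hstar, hdet⟩
    exact ⟨by rw [hstar, adjugate_mul, hdet, one_smul], hdet⟩

theorem of_mem_specialUnitaryGroup_fin_two_iff {a b c d : α} :
    !![a, b; c, d] ∈ specialUnitaryGroup (Fin 2) α ↔
      d = star a ∧ b = -star c ∧ star a * a + star c * c = 1 := by
  rw [mem_specialUnitaryGroup_iff_star_eq_adjugate, adjugate_fin_two_of, det_fin_two_of,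
    star_fin_two_of]
  simp only [EmbeddingLike.apply_eq_iff_eq, vecCons_inj, and_true]
  constructor
  · rintro ⟨⟨⟨rfl, hc⟩, -⟩, hdet⟩
    obtain rfl : b = -star c := by rw [hc, neg_neg]
    exact ⟨rfl, rfl, by linear_combination hdet⟩
  · rintro ⟨rfl, rfl, h⟩
    simp only [star_neg, star_star, neg_neg, and_self, true_and]
    linear_combination h

theorem specialUnitaryGroup.coe_inv (A : specialUnitaryGroup n α) :
    ((A⁻¹ : specialUnitaryGroup n α) : Matrix n n α) = (A : Matrix n n α)⁻¹ :=
  (inv_eq_left_inv (congrArg Subtype.val (inv_mul_cancel A))).symm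

end specialUnitaryGroup

open ComplexOrder in
theorem exists_unit_eigenvector {n : Type*} [Fintype n] [Nonempty n] (C : Matrix n n ℂ) :
    ∃ (μ : ℂ) (v : n → ℂ), star v ⬝ᵥ v = 1 ∧ C *ᵥ v = μ • v := by
  obtain ⟨μ, hμ⟩ := Module.End.exists_eigenvalue (mulVecLin C)
  obtain ⟨v, hv, hv0⟩ := hμ.exists_hasEigenvector
  rw [Module.End.mem_eigenspace_iff, mulVecLin_apply] at hv
  obtain ⟨r, hr, hrv⟩ := RCLike.pos_iff_exists_ofReal.mp (dotProduct_star_self_pos_iff.mpr hv0)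
  refine ⟨μ, ((√r)⁻¹ : ℂ) • v, ?_, by rw [mulVec_smul, hv, smul_comm]⟩
  rw [star_smul, smul_dotProduct, dotProduct_smul, ← hrv]
  have hsq : (√r : ℂ) ^ 2 = r := by exact_mod_cast Real.sq_sqrt hr.le
  have hsq0 : (√r : ℂ) ≠ 0 := by exact_mod_cast (Real.sqrt_pos.mpr hr).ne'
  simp only [smul_eq_mul, star_inv₀, Complex.star_def, Complex.conj_ofReal]
  field_simp
  exact hsq.symm

end Matrix

theorem Complex.exists_sq_eq_of_star_mul_self_eq_one {w : ℂ} (hw : star w * w = 1) :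
    ∃ z : ℂ, star z * z = 1 ∧ z ^ 2 = w := by
  obtain ⟨z, hz⟩ := IsAlgClosed.exists_pow_nat_eq w two_pos
  refine ⟨z, ?_, hz⟩
  have hw1 : ‖w‖ = 1 := (pow_eq_one_iff_of_nonneg (norm_nonneg w) two_ne_zero).mp <| by
    exact_mod_cast (conj_mul' w).symm.trans hw
  have hz1 : ‖z‖ ^ 2 = 1 := by rw [← norm_pow, hz, hw1]
  rw [star_def, conj_mul']
  exact_mod_cast hz1

local notation "SU₂" => Matrix.specialUnitaryGroup (Fin 2) ℂ

theorem exists_conj_lower_left_eq_zero (C : SU₂) :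
    ∃ U : SU₂, ((U⁻¹ * C * U : SU₂) : Matrix (Fin 2) (Fin 2) ℂ) 1 0 = 0 := by
  obtain ⟨μ, v, hv1, hv⟩ := exists_unit_eigenvector (C : Matrix (Fin 2) (Fin 2) ℂ)
  have hU : !![v 0, -star (v 1); v 1, star (v 0)] ∈ specialUnitaryGroup (Fin 2) ℂ := by
    rw [of_mem_specialUnitaryGroup_fin_two_iff]
    simpa [dotProduct, Fin.sum_univ_two] using hv1
  refine ⟨⟨_, hU⟩, ?_⟩
  have h0 := congrFun hv 0
  have h1 := congrFun hv 1
  simp only [mulVec, dotProduct, Fin.sum_univ_two, Pi.smul_apply, smul_eq_mul] at h0 h1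
  simp only [← star_eq_inv, Submonoid.coe_mul, specialUnitaryGroup.coe_star, star_fin_two_of,
    mul_apply, Fin.sum_univ_two, of_apply, cons_val', cons_val_zero, cons_val_one, cons_val_fin_one,
    star_neg, star_star]
  linear_combination (-v 1) * h0 + v 0 * h1

theorem eq_diagonal_of_lower_left_eq_zero (D : SU₂)
    (hD : (D : Matrix (Fin 2) (Fin 2) ℂ) 1 0 = 0) :
    ∃ w : ℂ, star w * w = 1 ∧ (D : Matrix (Fin 2) (Fin 2) ℂ) = !![w, 0; 0, star w] := by
  have hmem := D.2
  rw [eta_fin_two (D : Matrix (Fin 2) (Fin 2) ℂ), hD,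
    of_mem_specialUnitaryGroup_fin_two_iff] at hmem
  obtain ⟨h11, h01, hw⟩ := hmem
  refine ⟨_, by simpa using hw, (eta_fin_two _).trans ?_⟩
  rw [h11, h01, hD, star_zero, neg_zero]

theorem exists_commutatorElement_eq_of_lower_left_eq_zero (D : SU₂)
    (hD : (D : Matrix (Fin 2) (Fin 2) ℂ) 1 0 = 0) : ∃ M N : SU₂, ⁅M, N⁆ = D := by
  obtain ⟨w, hw, hDw⟩ := eq_diagonal_of_lower_left_eq_zero D hD
  obtain ⟨z, hz, rfl⟩ := Complex.exists_sq_eq_of_star_mul_self_eq_one hw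
  let B : SU₂ :=
    ⟨!![z, 0; 0, star z], by simpa [of_mem_specialUnitaryGroup_fin_two_iff] using hz⟩
  let B₀ : SU₂ := ⟨!![0, -1; 1, 0], by simp [of_mem_specialUnitaryGroup_fin_two_iff]⟩
  refine ⟨B, B₀, Subtype.ext ?_⟩
  rw [hDw, commutatorElement_def]
  -- `B₀ B⁻¹ B₀⁻¹ = B`: conjugating by `B₀` swaps the diagonal entries.
  change !![z, 0; 0, star z] * !![0, -1; 1, 0] * star !![z, 0; 0, star z] *
    star !![0, -1; 1, 0] = !![z ^ 2, 0; 0, star (z ^ 2)]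
  simp [star_fin_two_of, sq]

theorem commutatorElement_surjective_SU₂ (C : SU₂) : ∃ M N : SU₂, ⁅M, N⁆ = C := by
  obtain ⟨U, hU⟩ := exists_conj_lower_left_eq_zero C
  obtain ⟨M, N, hMN⟩ := exists_commutatorElement_eq_of_lower_left_eq_zero _ hU
  refine ⟨MulAut.conj U M, MulAut.conj U N, ?_⟩
  rw [← map_commutatorElement, hMN, MulAut.conj_apply]
  group

/-- The commutator map `c(M,N) = M N M⁻¹ N⁻¹` on `SU₂` is surjective. -/
theorem commutator_surjective_SU2 (C : Matrix (Fin 2) (Fin 2) ℂ)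
    (hC : C ∈ Matrix.specialUnitaryGroup (Fin 2) ℂ) :
    ∃ M N : Matrix (Fin 2) (Fin 2) ℂ,
      M ∈ Matrix.specialUnitaryGroup (Fin 2) ℂ ∧
      N ∈ Matrix.specialUnitaryGroup (Fin 2) ℂ ∧
      M * N * M⁻¹ * N⁻¹ = C := by
  obtain ⟨M, N, hMN⟩ := commutatorElement_surjective_SU₂ ⟨C, hC⟩
  refine ⟨M, N, M.2, N.2, ?_⟩
  rw [← specialUnitaryGroup.coe_inv, ← specialUnitaryGroup.coe_inv]
  exact congrArg Subtype.val hMN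
end

section
/- Let V_odd ⊂ {0,1}ⁿ be the set of vertices of the unit n-cube whose coordinates sum to an odd integer, and let DC_n be the convex hull of the even vertices (those whose coordinate sum is even). Then DC_n equals the set of points x ∈ [0,1]ⁿ whose ℓ¹-distance to V_odd is at least 1. -/
/-!
The set `cubeFarFromOdd` of cube points at distance at least `1` from every odd vertex is convex,
since on the cube the `ℓ¹`-distance to a vertex is an affine function, and it contains the even
vertices, since the distance between two vertices is the size of their symmetric difference.
Conversely, by Krein–Milman it suffices to show that every extreme point `x` of this compact set
is an even vertex. An integral point of `P` cannot be odd, being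
at distance `0` from itself. If `x` has a fractional coordinate `i`, it is not extreme: if no odd
vertex is at distance exactly `1` from `x`, move `x` along `eᵢ`. Otherwise such a tight vertex
forces a second fractional coordinate `j`, and a parity count shows that two tight odd vertices
differ at both `i` and `j` or at neither, so some direction `eᵢ ± eⱼ` keeps all tight constraints.
-/

open Finset Filter Topology
open scoped symmDiff

namespace Demicube

lemma even_iff_exists_int_real (m : ℕ) : Even m ↔ ∃ k : ℤ, (m : ℝ) = 2 * k := by
  constructor
  · rintro ⟨k, rfl⟩; exact ⟨k, by push_cast; ring⟩
  · rintro ⟨k, hk⟩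
    have : (m : ℤ) = 2 * k := by exact_mod_cast hk
    rw [Nat.even_iff]; omega

lemma odd_iff_exists_int_real (m : ℕ) : Odd m ↔ ∃ k : ℤ, (m : ℝ) = 2 * k + 1 := by
  constructor
  · rintro ⟨k, rfl⟩; exact ⟨k, by push_cast; ring⟩
  · rintro ⟨k, hk⟩
    have : (m : ℤ) = 2 * k + 1 := by exact_mod_cast hk
    rw [Nat.odd_iff]; omega

lemma even_card_symmDiff_of_odd {α : Type*} [DecidableEq α] {s t : Finset α} (hs : Odd #s)
    (ht : Odd #t) :
    Even #(s ∆ t) := by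
  have h := card_union_of_disjoint (disjoint_sdiff_sdiff : Disjoint (s \ t) (t \ s))
  have hs' := card_sdiff_add_card_inter s t
  have ht' := card_sdiff_add_card_inter t s
  rw [inter_comm] at ht'
  rw [Finset.symmDiff_def, h, Nat.even_add]
  rw [Nat.odd_iff] at hs ht
  simp only [Nat.even_iff]; omega

lemma eq_zero_or_eq_one_of_mem_Icc {t : ℝ} (ht : t ∈ Set.Icc 0 1) (ht' : t ∉ Set.Ioo 0 1) :
    t = 0 ∨ t = 1 := by
  have h : t ∈ Set.Icc (0 : ℝ) 1 \ Set.Ioo 0 1 := ⟨ht, ht'⟩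
  rwa [Set.Icc_sdiff_Ioo_same zero_le_one, Set.mem_insert_iff, Set.mem_singleton_iff] at h

lemma eq_zero_of_eventually_add_smul_mem {E : Type*} [AddCommGroup E] [Module ℝ E] {A : Set E}
    {x u : E} (hx : x ∈ A.extremePoints ℝ) (h : ∀ᶠ t in 𝓝 (0 : ℝ), x + t • u ∈ A) : u = 0 := by
  have h' : ∀ᶠ t in 𝓝 (0 : ℝ), x + (-t) • u ∈ A :=
    (continuous_neg.tendsto' (0 : ℝ) 0 neg_zero).eventually h
  obtain ⟨t, ⟨hpos, hneg⟩, ht⟩ :=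
    (((h.and h').filter_mono nhdsWithin_le_nhds).and (self_mem_nhdsWithin (s := Set.Ioi 0))).exists
  have hseg : x ∈ openSegment ℝ (x + (-t) • u) (x + t • u) :=
    ⟨1 / 2, 1 / 2, by norm_num, by norm_num, by norm_num, by module⟩
  have hzero : (-t) • u = 0 := by simpa using hx.2 hneg hpos hseg
  exact (smul_eq_zero.1 hzero).resolve_left (neg_ne_zero.2 (ne_of_gt ht))

variable {ι : Type*} [DecidableEq ι]

def cubeVertex (s : Finset ι) : ι → ℝ := fun k => if k ∈ s then 1 else 0

def vertexSign (s : Finset ι) : ι → ℝ := fun k => if k ∈ s then -1 else 1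

lemma cubeVertex_eq_zero_or_one (s : Finset ι) (k : ι) :
    cubeVertex s k = 0 ∨ cubeVertex s k = 1 := by
  by_cases hk : k ∈ s <;> simp [cubeVertex, hk]

lemma abs_sub_cubeVertex {t : ℝ} (ht : t ∈ Set.Icc 0 1) (s : Finset ι) (k : ι) :
    |t - cubeVertex s k| = cubeVertex s k + t * vertexSign s k := by
  by_cases hk : k ∈ s
  · simp [cubeVertex, vertexSign, hk, abs_of_nonpos (sub_nonpos.2 ht.2)]; ring
  · simp [cubeVertex, vertexSign, hk, abs_of_nonneg ht.1]

lemma abs_sub_cubeVertex_mem_Ioo {t : ℝ} (ht : t ∈ Set.Ioo 0 1) (s : Finset ι) (k : ι) :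
    |t - cubeVertex s k| ∈ Set.Ioo 0 1 := by
  rw [abs_sub_cubeVertex (Set.Ioo_subset_Icc_self ht)]
  by_cases hk : k ∈ s <;> simp [cubeVertex, vertexSign, hk, ht.1, ht.2]

lemma abs_cubeVertex_sub_cubeVertex (s t : Finset ι) (k : ι) :
    |cubeVertex s k - cubeVertex t k| = cubeVertex (s ∆ t) k := by
  by_cases hs : k ∈ s <;> by_cases ht : k ∈ t <;> simp [cubeVertex, Finset.mem_symmDiff, hs, ht]

lemma vertexSign_mul_self (s : Finset ι) (k : ι) : vertexSign s k * vertexSign s k = 1 := by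
  by_cases hk : k ∈ s <;> simp [vertexSign, hk]

lemma vertexSign_of_mem_symmDiff {s t : Finset ι} {k : ι} (hk : k ∈ s ∆ t) :
    vertexSign s k = -vertexSign t k := by
  rcases Finset.mem_symmDiff.1 hk with ⟨hs, ht⟩ | ⟨ht, hs⟩ <;> simp [vertexSign, hs, ht]

variable [Fintype ι]

def vertexDist (x : ι → ℝ) (s : Finset ι) : ℝ := ∑ k, |x k - cubeVertex s k|

variable (ι) in
def cubeFarFromOdd : Set (ι → ℝ) :=
  {x | (∀ k, x k ∈ Set.Icc 0 1) ∧ ∀ s : Finset ι, Odd #s → 1 ≤ vertexDist x s}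

lemma sum_cubeVertex (s : Finset ι) : ∑ k, cubeVertex s k = #s := by
  simp [cubeVertex]

lemma zero_or_one_and_iff_exists_cubeVertex (p : ℝ → Prop) {v : ι → ℝ} :
    ((∀ k, v k = 0 ∨ v k = 1) ∧ p (∑ k, v k)) ↔ ∃ s : Finset ι, p #s ∧ cubeVertex s = v := by
  constructor
  · rintro ⟨hv, hp⟩
    have hs : cubeVertex (univ.filter (v · = 1)) = v := funext fun k => by
      rcases hv k with h | h <;> simp [cubeVertex, h]
    exact ⟨_, by rwa [← hs, sum_cubeVertex] at hp, hs⟩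
  · rintro ⟨s, hp, rfl⟩
    exact ⟨cubeVertex_eq_zero_or_one s, by rwa [sum_cubeVertex]⟩

lemma vertexDist_eq {x : ι → ℝ} (hx : ∀ k, x k ∈ Set.Icc 0 1) (s : Finset ι) :
    vertexDist x s = #s + x ⬝ᵥ vertexSign s := by
  simp only [vertexDist, abs_sub_cubeVertex (hx _), sum_add_distrib, sum_cubeVertex, dotProduct]

lemma vertexDist_cubeVertex (s t : Finset ι) : vertexDist (cubeVertex s) t = #(s ∆ t) := by
  simp only [vertexDist, abs_cubeVertex_sub_cubeVertex, sum_cubeVertex]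

lemma cubeVertex_mem_cubeFarFromOdd {s : Finset ι} (hs : Even #s) :
    cubeVertex s ∈ cubeFarFromOdd ι := by
  refine ⟨fun k => ?_, fun t ht => ?_⟩
  · rcases cubeVertex_eq_zero_or_one s k with h | h <;> simp [h]
  · have hst : s ≠ t := by rintro rfl; exact Nat.not_even_iff_odd.2 ht hs
    rw [vertexDist_cubeVertex, Nat.one_le_cast, Nat.one_le_iff_ne_zero, Ne, card_eq_zero]
    exact fun h => hst (symmDiff_eq_bot.1 h)

lemma convex_cubeFarFromOdd : Convex ℝ (cubeFarFromOdd ι) := by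
  intro x hx y hy a b ha hb hab
  have hbox : ∀ k, (a • x + b • y) k ∈ Set.Icc 0 1 := fun k =>
    convex_Icc 0 1 (hx.1 k) (hy.1 k) ha hb hab
  refine ⟨hbox, fun s hs => ?_⟩
  have hxs := hx.2 s hs
  have hys := hy.2 s hs
  rw [vertexDist_eq hx.1] at hxs
  rw [vertexDist_eq hy.1] at hys
  rw [vertexDist_eq hbox, add_dotProduct, smul_dotProduct, smul_dotProduct, smul_eq_mul,
    smul_eq_mul]
  nlinarith

lemma isCompact_cubeFarFromOdd : IsCompact (cubeFarFromOdd ι) := by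
  refine (isCompact_univ_pi fun _ => isCompact_Icc).of_isClosed_subset ?_ fun x hx k _ => hx.1 k
  have h : cubeFarFromOdd ι =
      (⋂ k, {x | x k ∈ Set.Icc 0 1}) ∩ ⋂ s, ⋂ (_ : Odd #s), {x | 1 ≤ vertexDist x s} := by
    ext; simp [cubeFarFromOdd]
  rw [h]
  exact (isClosed_iInter fun k => isClosed_Icc.preimage (continuous_apply k)).inter
    (isClosed_iInter fun s => isClosed_iInter fun _ =>
      isClosed_le continuous_const (by unfold vertexDist; fun_prop))

lemma mem_symmDiff_of_vertexDist_eq_one {x : ι → ℝ} {s t : Finset ι} (hs : Odd #s) (ht : Odd #t)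
    (hxs : vertexDist x s = 1) (hxt : vertexDist x t = 1) (hst : s ≠ t) {k : ι}
    (hk : x k ∈ Set.Ioo 0 1) : k ∈ s ∆ t := by
  by_contra hkst
  have hlt : (#(s ∆ t) : ℝ) < 2 := calc
    (#(s ∆ t) : ℝ) = ∑ m, cubeVertex (s ∆ t) m := (sum_cubeVertex _).symm
    _ < ∑ m, (|x m - cubeVertex s m| + |x m - cubeVertex t m|) := by
      refine sum_lt_sum (fun m _ => ?_) ⟨k, mem_univ k, ?_⟩
      · rw [← abs_cubeVertex_sub_cubeVertex, abs_sub_comm (x m)]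
        exact abs_sub_le _ _ _
      · have h0 : cubeVertex (s ∆ t) k = 0 := if_neg hkst
        rw [h0]
        exact add_pos (abs_sub_cubeVertex_mem_Ioo hk s k).1 (abs_sub_cubeVertex_mem_Ioo hk t k).1
    _ = 2 := by rw [sum_add_distrib]; unfold vertexDist at hxs hxt; rw [hxs, hxt]; norm_num
  have hcard : #(s ∆ t) = 0 := by
    obtain ⟨r, hr⟩ := even_card_symmDiff_of_odd hs ht
    have : #(s ∆ t) < 2 := by exact_mod_cast hlt
    omega
  exact hst (symmDiff_eq_bot.1 (card_eq_zero.1 hcard))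

lemma exists_ne_mem_Ioo_of_vertexDist_eq_one {x : ι → ℝ} (hx : ∀ k, x k ∈ Set.Icc 0 1) {i : ι}
    (hi : x i ∈ Set.Ioo 0 1) {s : Finset ι} (hxs : vertexDist x s = 1) :
    ∃ j ≠ i, x j ∈ Set.Ioo 0 1 := by
  by_contra! hint
  have hterm : ∀ j ∈ univ.erase i, |x j - cubeVertex s j| = 0 ∨ |x j - cubeVertex s j| = 1 := by
    intro j hj
    rcases eq_zero_or_eq_one_of_mem_Icc (hx j) (hint j (ne_of_mem_erase hj)) with h | h <;>
      rcases cubeVertex_eq_zero_or_one s j with h' | h' <;> simp [h, h']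
  have hsplit := add_sum_erase univ (fun j => |x j - cubeVertex s j|) (mem_univ i)
  rw [← vertexDist, hxs] at hsplit
  obtain ⟨hpos, hlt⟩ := abs_sub_cubeVertex_mem_Ioo hi s i
  by_cases hone : ∃ j ∈ univ.erase i, |x j - cubeVertex s j| = 1
  · obtain ⟨j, hj, hj1⟩ := hone
    have hle := single_le_sum (fun m _ => abs_nonneg (x m - cubeVertex s m)) hj
    rw [hj1] at hle
    linarith
  · rw [sum_eq_zero fun j hj => (hterm j hj).resolve_right fun h => hone ⟨j, hj, h⟩] at hsplit
    linarith

lemma exists_direction_of_mem_Ioo {x : ι → ℝ} (hx : x ∈ cubeFarFromOdd ι) {i : ι}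
    (hi : x i ∈ Set.Ioo 0 1) :
    ∃ u : ι → ℝ, u ≠ 0 ∧ (∀ k, u k ≠ 0 → x k ∈ Set.Ioo 0 1) ∧
      ∀ s, Odd #s → vertexDist x s = 1 → u ⬝ᵥ vertexSign s = 0 := by
  by_cases htight : ∃ t, Odd #t ∧ vertexDist x t = 1
  · obtain ⟨t, ht, hxt⟩ := htight
    obtain ⟨j, hji, hj⟩ := exists_ne_mem_Ioo_of_vertexDist_eq_one hx.1 hi hxt
    -- `u ⬝ᵥ vertexSign t = 0`, and any other tight odd vertex differs from `t` at both `i` and `j`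
    refine ⟨Pi.single i 1 - (vertexSign t i * vertexSign t j) • Pi.single j 1, ?_, ?_, ?_⟩
    · intro h
      simpa [hji.symm] using congrFun h i
    · intro k hk
      by_cases hki : k = i
      · exact hki ▸ hi
      by_cases hkj : k = j
      · exact hkj ▸ hj
      simp [hki, hkj] at hk
    · intro s hs hxs
      simp only [sub_dotProduct, smul_dotProduct, single_dotProduct, one_mul, smul_eq_mul]
      by_cases hst : s = t
      · subst hst
        linear_combination (-vertexSign s i) * vertexSign_mul_self s j
      · have hmem := fun {k} => mem_symmDiff_of_vertexDist_eq_one hs ht hxs hxt hst (k := k)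
        rw [vertexSign_of_mem_symmDiff (hmem hi), vertexSign_of_mem_symmDiff (hmem hj)]
        linear_combination vertexSign t i * vertexSign_mul_self t j
  · push Not at htight
    refine ⟨Pi.single i 1, fun h => by simpa using congrFun h i, fun k hk => ?_,
      fun s hs hxs => absurd hxs (htight s hs)⟩
    by_cases hki : k = i
    · exact hki ▸ hi
    simp [hki] at hk

lemma vertexDist_add_smul {x u : ι → ℝ} {t : ℝ} (hx : ∀ k, x k ∈ Set.Icc 0 1)
    (hxu : ∀ k, (x + t • u) k ∈ Set.Icc 0 1) (s : Finset ι) :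
    vertexDist (x + t • u) s = vertexDist x s + t * (u ⬝ᵥ vertexSign s) := by
  rw [vertexDist_eq hxu, vertexDist_eq hx, add_dotProduct, smul_dotProduct, smul_eq_mul, add_assoc]

lemma eventually_add_smul_mem_cubeFarFromOdd {x u : ι → ℝ} (hx : x ∈ cubeFarFromOdd ι)
    (hu : ∀ k, u k ≠ 0 → x k ∈ Set.Ioo 0 1)
    (htight : ∀ s, Odd #s → vertexDist x s = 1 → u ⬝ᵥ vertexSign s = 0) :
    ∀ᶠ t in 𝓝 (0 : ℝ), x + t • u ∈ cubeFarFromOdd ι := by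
  have hbox : ∀ᶠ t in 𝓝 (0 : ℝ), ∀ k, (x + t • u) k ∈ Set.Icc 0 1 := by
    refine eventually_all.2 fun k => ?_
    by_cases huk : u k = 0
    · exact Eventually.of_forall fun t => by simpa [huk] using hx.1 k
    · have hcont : Tendsto (fun t : ℝ => x k + t * u k) (𝓝 0) (𝓝 (x k)) :=
        Continuous.tendsto' (by fun_prop) 0 _ (by simp)
      exact (hcont.eventually (Ioo_mem_nhds (hu k huk).1 (hu k huk).2)).mono
        fun t ht => Set.Ioo_subset_Icc_self ht
  have hineq : ∀ s, ∀ᶠ t in 𝓝 (0 : ℝ), Odd #s → 1 ≤ vertexDist x s + t * (u ⬝ᵥ vertexSign s) := by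
    intro s
    by_cases hs : Odd #s
    · rcases (hx.2 s hs).eq_or_lt with hxs | hxs
      · exact Eventually.of_forall fun t _ => by rw [htight s hs hxs.symm, ← hxs]; simp
      · have hcont : Tendsto (fun t : ℝ => vertexDist x s + t * (u ⬝ᵥ vertexSign s)) (𝓝 0)
            (𝓝 (vertexDist x s)) :=
          Continuous.tendsto' (by fun_prop) 0 _ (by simp)
        exact (hcont.eventually_const_lt hxs).mono fun t ht _ => ht.le
    · exact Eventually.of_forall fun t h => absurd h hs
  filter_upwards [hbox, eventually_all.2 hineq] with t hbox hineq
  exact ⟨hbox, fun s hs => (vertexDist_add_smul hx.1 hbox s).symm ▸ hineq s hs⟩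

lemma extremePoints_cubeFarFromOdd_subset :
    (cubeFarFromOdd ι).extremePoints ℝ ⊆ cubeVertex '' {s | Even #s} := by
  intro x hx
  have hint : ∀ k, x k = 0 ∨ x k = 1 := by
    refine fun i => eq_zero_or_eq_one_of_mem_Icc (hx.1.1 i) fun hi => ?_
    obtain ⟨u, hu0, hu, htight⟩ := exists_direction_of_mem_Ioo hx.1 hi
    exact hu0 (eq_zero_of_eventually_add_smul_mem hx
      (eventually_add_smul_mem_cubeFarFromOdd hx.1 hu htight))
  obtain ⟨s, -, rfl⟩ := (zero_or_one_and_iff_exists_cubeVertex (fun _ => True)).1 ⟨hint, trivial⟩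
  refine ⟨s, Nat.not_odd_iff_even.1 fun hs => ?_, rfl⟩
  have h := hx.1.2 s hs
  rw [vertexDist_cubeVertex, symmDiff_self] at h
  norm_num at h

theorem convexHull_cubeVertex_even :
    convexHull ℝ (cubeVertex '' {s | Even #s}) = cubeFarFromOdd ι := by
  have hsub : cubeVertex '' {s | Even #s} ⊆ cubeFarFromOdd ι := by
    rintro _ ⟨s, hs, rfl⟩
    exact cubeVertex_mem_cubeFarFromOdd hs
  refine (convexHull_min hsub convex_cubeFarFromOdd).antisymm ?_
  calc cubeFarFromOdd ι
      = closure (convexHull ℝ ((cubeFarFromOdd ι).extremePoints ℝ)) :=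
        (closure_convexHull_extremePoints isCompact_cubeFarFromOdd convex_cubeFarFromOdd).symm
    _ ⊆ closure (convexHull ℝ (cubeVertex '' {s | Even #s})) :=
        closure_mono (convexHull_mono extremePoints_cubeFarFromOdd_subset)
    _ = convexHull ℝ (cubeVertex '' {s | Even #s}) :=
        ((Set.toFinite _).isClosed_convexHull (𝕜 := ℝ)).closure_eq

end Demicube

open Demicube in
/-- The `n`-demicube, i.e. the convex hull of the even vertices of the unit `n`-cube, equals the
set of points of the cube whose `ℓ¹`-distance to every odd vertex is at least `1`. -/
theorem demicube_eq_dist_ge_one (n : ℕ) :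
    convexHull ℝ {v : Fin n → ℝ |
        (∀ i, v i = 0 ∨ v i = 1) ∧ ∃ k : ℤ, ∑ i, v i = 2 * (k : ℝ)} =
      {x : Fin n → ℝ | (∀ i, x i ∈ Set.Icc (0 : ℝ) 1) ∧
        ∀ v : Fin n → ℝ,
          ((∀ i, v i = 0 ∨ v i = 1) ∧ ∃ k : ℤ, ∑ i, v i = 2 * (k : ℝ) + 1) →
          1 ≤ ∑ i, |x i - v i|} := by
  convert convexHull_cubeVertex_even (ι := Fin n) using 2
  · ext v
    simp only [Set.mem_ofPred_eq, Set.mem_image, zero_or_one_and_iff_exists_cubeVertex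
      (fun r => ∃ k : ℤ, r = 2 * k), ← even_iff_exists_int_real]
  · ext x
    simp only [cubeFarFromOdd, vertexDist, Set.mem_ofPred_eq, ← odd_iff_exists_int_real,
      zero_or_one_and_iff_exists_cubeVertex (fun r => ∃ k : ℤ, r = 2 * k + 1),
      forall_exists_index, and_imp, forall_apply_eq_imp_iff₂]
end

section
/- Let l = (l₁, …, l_n) ∈ [0,1]ⁿ satisfy l₁ ≥ l₂ ≥ … ≥ l_n and l₁ + l₂ ≤ 1. Then the ℓ¹-distance from l to the set V_odd of odd vertices of the unit n-cube equals (1 − l₁) + l₂ + … + l_n, and it is achieved at the vertex e₁ = (1, 0, …, 0). -/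
/-!
The `ℓ¹`-distance from `l ∈ [0,1]ⁿ` to the vertex `1_S` is `∑ lᵢ + ∑_{i ∈ S} (1 - 2lᵢ)`.
An odd vertex has `S ≠ ∅`. Every summand `1 - 2lᵢ` is at least `1 - 2l₁`, and for `i ≠ 1`
it is even nonnegative, since `2lᵢ ≤ 2l₂ ≤ l₁ + l₂ ≤ 1`. Hence the sum over `S` is at least
`1 - 2l₁`, which is its value at `S = {1}`.
-/

open Finset

section
variable {ι : Type*} [DecidableEq ι]

theorem exists_finset_of_odd_vertex [Fintype ι] {v : ι → ℝ} (hv : ∀ i, v i = 0 ∨ v i = 1)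
    (hodd : ∃ k : ℤ, ∑ i, v i = 2 * (k : ℝ) + 1) :
    ∃ S : Finset ι, S.Nonempty ∧ v = fun i => if i ∈ S then 1 else 0 := by
  refine ⟨univ.filter (v · = 1), ?_, funext fun i => ?_⟩
  · by_contra hempty
    obtain ⟨k, hk⟩ := hodd
    have hzero : ∑ i, v i = 0 := by
      refine sum_eq_zero fun i _ => (hv i).resolve_right fun h1 => hempty ⟨i, ?_⟩
      simpa using h1
    have : (2 * k + 1 : ℤ) = 0 := by exact_mod_cast hk.symm.trans hzero
    omega
  · rcases hv i with h | h <;> simp [h]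

theorem sum_abs_sub_indicator [Fintype ι] {l : ι → ℝ} (hl : ∀ i, l i ∈ Set.Icc (0 : ℝ) 1)
    (S : Finset ι) :
    ∑ i, |l i - if i ∈ S then 1 else 0| = ∑ i, l i + ∑ i ∈ S, (1 - 2 * l i) := by
  have hterm : ∀ i, |l i - if i ∈ S then 1 else 0| = l i + if i ∈ S then 1 - 2 * l i else 0 := by
    intro i
    split_ifs
    · rw [abs_of_nonpos (by linarith [(hl i).2])]; ring
    · rw [sub_zero, add_zero, abs_of_nonneg (hl i).1]
  simp only [hterm, sum_add_distrib, sum_ite_mem, univ_inter]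

theorem one_sub_two_mul_le_sum {l : ι → ℝ} {a : ι} (hmax : ∀ i, l i ≤ l a)
    (hhalf : ∀ i, i ≠ a → 2 * l i ≤ 1) {S : Finset ι} (hS : S.Nonempty) :
    1 - 2 * l a ≤ ∑ i ∈ S, (1 - 2 * l i) := by
  have hnonneg : ∀ i ∈ S.erase a, 0 ≤ 1 - 2 * l i := fun i hi =>
    sub_nonneg.2 (hhalf i (ne_of_mem_erase hi))
  by_cases ha : a ∈ S
  · rw [← add_sum_erase S _ ha]
    exact le_add_of_nonneg_right (sum_nonneg hnonneg)
  · obtain ⟨j, hj⟩ := hS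
    rw [erase_eq_of_notMem ha] at hnonneg
    calc 1 - 2 * l a ≤ 1 - 2 * l j := by linarith [hmax j]
      _ ≤ ∑ i ∈ S, (1 - 2 * l i) := single_le_sum hnonneg hj

end

/-- For `l ∈ [0,1]ⁿ` with `l₁ ≥ l₂ ≥ … ≥ l_n` and `l₁ + l₂ ≤ 1`, the `ℓ¹`-distance from `l`
to the set of odd vertices of the unit cube equals `(1 − l₁) + l₂ + … + l_n`, and it is
achieved at the vertex `e₁ = (1,0,…,0)`. -/
theorem dist_to_odd_vertices (n : ℕ) (hn : 2 ≤ n) (l : Fin n → ℝ)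
    (hl : ∀ i, l i ∈ Set.Icc (0 : ℝ) 1)
    (hmono : ∀ i j : Fin n, i ≤ j → l j ≤ l i)
    (hsum : l ⟨0, by omega⟩ + l ⟨1, by omega⟩ ≤ 1) :
    IsLeast {d : ℝ | ∃ v : Fin n → ℝ,
        ((∀ i, v i = 0 ∨ v i = 1) ∧ ∃ k : ℤ, ∑ i, v i = 2 * (k : ℝ) + 1) ∧
        d = ∑ i, |l i - v i|}
      ((1 - l ⟨0, by omega⟩) + ∑ i ∈ univ.erase (⟨0, by omega⟩ : Fin n), l i) ∧
    (∑ i, |l i - (if i = (⟨0, by omega⟩ : Fin n) then (1 : ℝ) else 0)|)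
      = (1 - l ⟨0, by omega⟩) + ∑ i ∈ univ.erase (⟨0, by omega⟩ : Fin n), l i := by
  set a : Fin n := ⟨0, by omega⟩
  set b : Fin n := ⟨1, by omega⟩
  have hvalue : (1 - l a) + ∑ i ∈ univ.erase a, l i = ∑ i, l i + (1 - 2 * l a) := by
    rw [← add_sum_erase univ l (mem_univ a)]; ring
  have he₁ : ∑ i, |l i - (if i = a then (1 : ℝ) else 0)| = ∑ i, l i + (1 - 2 * l a) := by
    simpa only [mem_singleton, sum_singleton] using sum_abs_sub_indicator hl {a}
  have hmax : ∀ i, l i ≤ l a := fun i => hmono a i (Nat.zero_le i)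
  have hhalf : ∀ i, i ≠ a → 2 * l i ≤ 1 := fun i hi => by
    have hbi : b ≤ i := Nat.one_le_iff_ne_zero.2 fun h => hi (Fin.ext h)
    linarith [hmono b i hbi, hmax b]
  rw [hvalue]
  refine ⟨⟨⟨_, ⟨fun i => by by_cases h : i = a <;> simp [h], 0, by simp⟩, he₁.symm⟩, ?_⟩, he₁⟩
  rintro d ⟨v, ⟨hv, hodd⟩, rfl⟩
  obtain ⟨S, hS, rfl⟩ := exists_finset_of_odd_vertex hv hodd
  rw [sum_abs_sub_indicator hl S]
  linarith [one_sub_two_mul_le_sum hmax hhalf hS]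
end

section
/- Consider the conjugation action of the diagonal subgroup H = {diag(e^{is}, e^{−is})} on SU₂. Writing M ∈ SU₂ as [[m₁₁, −conj(m₂₁)],[m₂₁, conj(m₁₁)]], the functions f(M) = tr(M) = 2·Re(m₁₁) and g(M) = tr(M·B), where B = diag(e^{iπ(t−1)}, e^{−iπ(t−1)}) with t ∈ (0,1), separate H-orbits: two matrices M, M′ ∈ SU₂ lie in the same H-orbit if and only if f(M) = f(M′) and g(M) = g(M′). -/
/-!
Every `M ∈ SU₂` has the form `[[a, -c̄], [c, ā]]` with `|a|² + |c|² = 1`, and conjugation by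
`diag(e^{is}, e^{-is})` fixes `a` and multiplies `c` by `e^{-2is}`; hence the `H`-orbits are the
level sets of `a = M 0 0`. The two traces are `2 Re a` and `2 Re (a e^{iθ})` with
`θ = π(t - 1)`, and since `sin θ ≠ 0` they determine `a`.
-/

open Matrix Complex

/-- The diagonal element `diag(e^{is}, e^{-is})` of `SU₂`. -/
noncomputable def diagRot (s : ℝ) : Matrix (Fin 2) (Fin 2) ℂ :=
  !![Complex.exp (s * Complex.I), 0; 0, Complex.exp (-(s * Complex.I))]

open ComplexConjugate

theorem Complex.conj_exp_ofReal_mul_I (θ : ℝ) : conj (exp (θ * I)) = exp (-(θ * I)) := by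
  rw [← Complex.exp_conj, map_mul, conj_ofReal, conj_I, mul_neg]

theorem Complex.exists_exp_mul_I_mul_eq_of_norm_eq {z w : ℂ} (h : ‖z‖ = ‖w‖) :
    ∃ θ : ℝ, exp (θ * I) * z = w := by
  refine ⟨arg w - arg z, ?_⟩
  calc exp ((arg w - arg z : ℝ) * I) * z
      = exp ((arg w - arg z : ℝ) * I) * (‖z‖ * exp (arg z * I)) := by
        rw [norm_mul_exp_arg_mul_I]
    _ = ‖w‖ * exp (arg w * I) := by
        rw [h, mul_left_comm, ← exp_add]; push_cast; ring_nf
    _ = w := norm_mul_exp_arg_mul_I w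

namespace Matrix

theorem star_eq_adjugate_of_mem_specialUnitaryGroup {n α : Type*} [Fintype n] [DecidableEq n]
    [CommRing α] [StarRing α] {A : Matrix n n α} (hA : A ∈ specialUnitaryGroup n α) :
    star A = adjugate A := by
  obtain ⟨hunit, hdet⟩ := mem_specialUnitaryGroup_iff.mp hA
  calc star A = star A * (A * adjugate A) := by rw [mul_adjugate, hdet, one_smul, mul_one]
    _ = adjugate A := by rw [← mul_assoc, mem_unitaryGroup_iff'.mp hunit, one_mul]

theorem apply_eq_of_mem_specialUnitaryGroup_fin_two {α : Type*} [CommRing α] [StarRing α]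
    {A : Matrix (Fin 2) (Fin 2) α} (hA : A ∈ specialUnitaryGroup (Fin 2) α) :
    A 1 1 = star (A 0 0) ∧ A 0 1 = -star (A 1 0) := by
  have h := star_eq_adjugate_of_mem_specialUnitaryGroup hA
  rw [adjugate_fin_two] at h
  have h00 := congrFun (congrFun h 0) 0
  have h01 := congrFun (congrFun h 0) 1
  simp only [star_apply, of_apply, cons_val', cons_val_zero, cons_val_one, empty_val',
    cons_val_fin_one] at h00 h01
  exact ⟨h00.symm, by rw [h01, neg_neg]⟩

theorem normSq_add_normSq_of_mem_specialUnitaryGroup_fin_two {A : Matrix (Fin 2) (Fin 2) ℂ}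
    (hA : A ∈ specialUnitaryGroup (Fin 2) ℂ) : normSq (A 0 0) + normSq (A 1 0) = 1 := by
  obtain ⟨h11, h01⟩ := apply_eq_of_mem_specialUnitaryGroup_fin_two hA
  have hdet := (mem_specialUnitaryGroup_iff.mp hA).2
  rw [det_fin_two, h11, h01] at hdet
  apply ofReal_injective
  push_cast
  rw [normSq_eq_conj_mul_self, normSq_eq_conj_mul_self]
  simp only [Complex.star_def] at hdet
  linear_combination hdet

theorem trace_of_mem_specialUnitaryGroup_fin_two {A : Matrix (Fin 2) (Fin 2) ℂ}
    (hA : A ∈ specialUnitaryGroup (Fin 2) ℂ) : A.trace = (2 * (A 0 0).re : ℝ) := by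
  rw [trace_fin_two, (apply_eq_of_mem_specialUnitaryGroup_fin_two hA).1, Complex.star_def,
    add_conj]

theorem trace_mul_diag_exp_of_mem_specialUnitaryGroup_fin_two {A : Matrix (Fin 2) (Fin 2) ℂ}
    (hA : A ∈ specialUnitaryGroup (Fin 2) ℂ) (θ : ℝ) :
    (A * !![exp (θ * I), 0; 0, exp (-(θ * I))]).trace =
      (2 * ((A 0 0).re * Real.cos θ - (A 0 0).im * Real.sin θ) : ℝ) := by
  simp only [trace_fin_two, mul_apply, Fin.sum_univ_two, of_apply, cons_val', cons_val_zero,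
    cons_val_one, empty_val', cons_val_fin_one, mul_zero, add_zero, zero_add]
  rw [(apply_eq_of_mem_specialUnitaryGroup_fin_two hA).1, Complex.star_def,
    ← conj_exp_ofReal_mul_I, ← map_mul, add_conj, mul_re, exp_ofReal_mul_I_re,
    exp_ofReal_mul_I_im]

end Matrix

theorem diagRot_mul_mul_diagRot_neg (s : ℝ) (M : Matrix (Fin 2) (Fin 2) ℂ) :
    diagRot s * M * diagRot (-s) =
      !![M 0 0, exp (2 * s * I) * M 0 1; exp (-(2 * s * I)) * M 1 0, M 1 1] := by
  have hexp : ∀ a b x : ℂ, exp a * x * exp b = exp (a + b) * x := fun a b x => by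
    rw [exp_add]; ring
  rw [eta_fin_two M]
  simp only [diagRot, mul_fin_two, zero_mul, mul_zero, add_zero, zero_add, hexp]
  push_cast
  ring_nf
  simp

theorem exists_diagRot_conj_eq_iff_apply_zero_zero_eq {M M' : Matrix (Fin 2) (Fin 2) ℂ}
    (hM : M ∈ specialUnitaryGroup (Fin 2) ℂ) (hM' : M' ∈ specialUnitaryGroup (Fin 2) ℂ) :
    (∃ s : ℝ, diagRot s * M * diagRot (-s) = M') ↔ M 0 0 = M' 0 0 := by
  refine ⟨fun ⟨s, hs⟩ => by rw [← hs, diagRot_mul_mul_diagRot_neg]; rfl, fun h00 => ?_⟩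
  have hnorm : ‖M 1 0‖ = ‖M' 1 0‖ := by
    have h := normSq_add_normSq_of_mem_specialUnitaryGroup_fin_two hM
    rw [h00, ← normSq_add_normSq_of_mem_specialUnitaryGroup_fin_two hM', add_right_inj,
      normSq_eq_norm_sq, normSq_eq_norm_sq] at h
    exact (pow_left_inj₀ (norm_nonneg _) (norm_nonneg _) two_ne_zero).mp h
  obtain ⟨θ, hθ⟩ := exists_exp_mul_I_mul_eq_of_norm_eq hnorm
  obtain ⟨h11, h01⟩ := apply_eq_of_mem_specialUnitaryGroup_fin_two hM
  obtain ⟨h11', h01'⟩ := apply_eq_of_mem_specialUnitaryGroup_fin_two hM'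
  refine ⟨-θ / 2, ?_⟩
  rw [diagRot_mul_mul_diagRot_neg, eta_fin_two M', h01, h11, h01', h11', ← hθ, h00, star_mul',
    Complex.star_def, conj_exp_ofReal_mul_I]
  push_cast
  ring_nf

theorem apply_zero_zero_eq_iff_traces_eq {M M' : Matrix (Fin 2) (Fin 2) ℂ}
    (hM : M ∈ specialUnitaryGroup (Fin 2) ℂ) (hM' : M' ∈ specialUnitaryGroup (Fin 2) ℂ)
    {θ : ℝ} (hθ : Real.sin θ ≠ 0) :
    M 0 0 = M' 0 0 ↔ M.trace = M'.trace ∧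
      (M * !![exp (θ * I), 0; 0, exp (-(θ * I))]).trace =
        (M' * !![exp (θ * I), 0; 0, exp (-(θ * I))]).trace := by
  simp only [trace_of_mem_specialUnitaryGroup_fin_two hM,
    trace_of_mem_specialUnitaryGroup_fin_two hM',
    trace_mul_diag_exp_of_mem_specialUnitaryGroup_fin_two hM,
    trace_mul_diag_exp_of_mem_specialUnitaryGroup_fin_two hM', ofReal_inj]
  refine ⟨fun h => by rw [h]; exact ⟨rfl, rfl⟩, fun ⟨hre, htr⟩ => ?_⟩
  have hre' : (M 0 0).re = (M' 0 0).re := by linarith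
  rw [hre'] at htr
  have him : (M 0 0).im = (M' 0 0).im := mul_right_cancel₀ hθ (by linarith)
  exact Complex.ext hre' him

/-- For `t ∈ (0,1)` and `B = diag(e^{iπ(t−1)}, e^{−iπ(t−1)})`, the functions
`f(M) = tr M` and `g(M) = tr (M·B)` separate orbits of the conjugation action of the
diagonal subgroup `H` on `SU₂`: two elements of `SU₂` are `H`-conjugate iff they have the
same values of `f` and `g`. -/
theorem traces_separate_H_orbits (t : ℝ) (ht : t ∈ Set.Ioo (0 : ℝ) 1)
    (M M' : Matrix (Fin 2) (Fin 2) ℂ)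
    (hM : M ∈ Matrix.specialUnitaryGroup (Fin 2) ℂ)
    (hM' : M' ∈ Matrix.specialUnitaryGroup (Fin 2) ℂ) :
    (∃ s : ℝ, diagRot s * M * diagRot (-s) = M') ↔
      (M.trace = M'.trace ∧
        (M * !![Complex.exp (Real.pi * (t - 1) * Complex.I), 0;
                0, Complex.exp (-(Real.pi * (t - 1) * Complex.I))]).trace =
        (M' * !![Complex.exp (Real.pi * (t - 1) * Complex.I), 0;
                0, Complex.exp (-(Real.pi * (t - 1) * Complex.I))]).trace) := by
  have hsin : Real.sin (Real.pi * (t - 1)) ≠ 0 := by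
    rw [mul_sub, mul_one, Real.sin_sub_pi, neg_ne_zero]
    exact (Real.sin_pos_of_pos_of_lt_pi (mul_pos Real.pi_pos ht.1)
      (mul_lt_of_lt_one_right Real.pi_pos ht.2)).ne'
  have h := apply_zero_zero_eq_iff_traces_eq hM hM' hsin
  push_cast at h
  rw [exists_diagRot_conj_eq_iff_apply_zero_zero_eq hM hM', h]
end
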